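/- arXiv:2603.01964 — 5 statements merged into one kernel-verified Lean document; each statement's English description precedes it below -/
import Mathlib

section
/- Let N < L, ρ = N/L, and |z| < r_0 := ρ^ρ (1−ρ)^{1−ρ}. Writing L_z and R_z for the left and right Bethe roots (roots of w^N(w+1)^{L−N} = z^L with Re(w) < −ρ, respectively Re(w) > −ρ), one has ∏_{u ∈ L_z} (−u)^N = ∏_{v ∈ R_z} (v+1)^{L−N}. -/
/-!
Evaluating the factorization `w^N (w+1)^M - c = ∏_{u∈A} (w-u) ∏_{v∈B} (w-v)` at `w = 0` gives
`∏_A (-u) · ∏_B (-v) = -c`, while each right root satisfies `(v+1)^M (-v)^N = (-1)^N c`.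
Hence both sides of the identity, multiplied by `(∏_B (-v))^N`, equal `(-c)^N`; this factor
is nonzero because `c ≠ 0` forces every root to be nonzero.
-/

open Finset

theorem neg_one_pow_mul_self {R : Type*} [Monoid R] [HasDistribNeg R] (n : ℕ) :
    (-1 : R) ^ (n * n) = (-1) ^ n := by
  rcases n.even_or_odd with h | h
  · rw [(h.mul_right n).neg_one_pow, h.neg_one_pow]
  · rw [(h.mul h).neg_one_pow, h.neg_one_pow]

section BetheRoots

variable {R : Type*} [CommRing R] {N M : ℕ} {c : R} {A B : Finset R}

theorem pow_mul_add_one_pow_eq_of_mem_right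
    (hfac : ∀ w, w ^ N * (w + 1) ^ M - c = (∏ u ∈ A, (w - u)) * ∏ v ∈ B, (w - v))
    {v : R} (hv : v ∈ B) : v ^ N * (v + 1) ^ M = c := by
  simpa [sub_eq_zero, prod_eq_zero hv (sub_self v)] using hfac v

theorem prod_neg_mul_prod_neg_eq_neg (hN : 0 < N)
    (hfac : ∀ w, w ^ N * (w + 1) ^ M - c = (∏ u ∈ A, (w - u)) * ∏ v ∈ B, (w - v)) :
    (∏ u ∈ A, -u) * ∏ v ∈ B, -v = -c := by
  simpa [zero_pow hN.ne'] using (hfac 0).symm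

theorem prod_neg_pow_eq_prod_add_one_pow [IsDomain R] (hN : 0 < N) (hc : c ≠ 0)
    (hB : #B = N)
    (hfac : ∀ w, w ^ N * (w + 1) ^ M - c = (∏ u ∈ A, (w - u)) * ∏ v ∈ B, (w - v)) :
    ∏ u ∈ A, (-u) ^ N = ∏ v ∈ B, (v + 1) ^ M := by
  have hroot := fun v (hv : v ∈ B) => pow_mul_add_one_pow_eq_of_mem_right hfac hv
  set Q := ∏ v ∈ B, -v
  have hQ : Q ^ N ≠ 0 := by
    refine pow_ne_zero N (prod_ne_zero_iff.2 fun v hv => neg_ne_zero.2 fun hv0 => hc ?_)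
    rw [← hroot v hv, hv0, zero_pow hN.ne', zero_mul]
  have hleft : (∏ u ∈ A, (-u) ^ N) * Q ^ N = (-c) ^ N := by
    rw [prod_pow, ← mul_pow, prod_neg_mul_prod_neg_eq_neg hN hfac]
  have hright : (∏ v ∈ B, (v + 1) ^ M) * Q ^ N = (-c) ^ N := by
    have hfactor : ∀ v ∈ B, (v + 1) ^ M * (-v) ^ N = (-1) ^ N * c := fun v hv => by
      rw [neg_pow, ← hroot v hv]
      ring
    rw [← prod_pow, ← prod_mul_distrib, prod_congr rfl hfactor, prod_const, hB, mul_pow,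
      ← pow_mul, neg_one_pow_mul_self, neg_pow c]
  exact mul_right_cancel₀ hQ (hleft.trans hright.symm)

end BetheRoots

theorem statement3_general (N L : ℕ) (hN : 0 < N) (z : ℂ) (hz : z ≠ 0)
    (Lz Rz : Finset ℂ)
    (hRcard : Rz.card = N)
    (hfac : ∀ w : ℂ,
      w ^ N * (w + 1) ^ (L - N) - z ^ L =
        (∏ u ∈ Lz, (w - u)) * (∏ v ∈ Rz, (w - v))) :
    ∏ u ∈ Lz, (-u) ^ N = ∏ v ∈ Rz, (v + 1) ^ (L - N) :=
  prod_neg_pow_eq_prod_add_one_pow hN (pow_ne_zero L hz) hRcard hfac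

/-- with `N < L`, `ρ = N/L`, `|z| < r₀ = ρ^ρ (1−ρ)^{1−ρ}`, and the Bethe
roots of `w^N (w+1)^{L−N} = z^L` split into the left roots `L_z` (with `Re w < −ρ`,
`L−N` of them) and the right roots `R_z` (with `Re w > −ρ`, `N` of them), one has
`∏_{u∈L_z}(−u)^N = ∏_{v∈R_z}(v+1)^{L−N}`. -/
theorem statement3 (N L : ℕ) (hN : 0 < N) (hNL : N < L) (z : ℂ) (hz : z ≠ 0)
    (ρ : ℝ) (hρ : ρ = (N : ℝ) / L)
    (hzr : ‖z‖ < ρ ^ ρ * (1 - ρ) ^ (1 - ρ))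
    (Lz Rz : Finset ℂ)
    (hLre : ∀ u ∈ Lz, u.re < -ρ) (hRre : ∀ v ∈ Rz, -ρ < v.re)
    (hRcard : Rz.card = N) (hLcard : Lz.card = L - N)
    (hfac : ∀ w : ℂ,
      w ^ N * (w + 1) ^ (L - N) - z ^ L =
        (∏ u ∈ Lz, (w - u)) * (∏ v ∈ Rz, (w - v))) :
    ∏ u ∈ Lz, (-u) ^ N = ∏ v ∈ Rz, (v + 1) ^ (L - N) :=
  statement3_general N L hN z hz Lz Rz hRcard hfac
end

section
/- With notation as in the martingale lemma: for the hitting time τ := min{m ≥ 0 : G_m > y_{m+1}} of the strict epigraph of a configuration Y = (y_1,…,y_N) with y_N < ⋯ < y_1, and for any 1 ≤ i ≤ N and starting point x ∈ ℤ, E_{G_0=x}[ C(G_τ − y_i − 1, i − τ − 1) (1−ρ)^{G_τ} ((1−ρ)/ρ)^τ 1_{τ < i} ] = 1_{x ≥ y_i + i} C(x − y_i − 1, i − 1) (1−ρ)^x. -/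
/-!
Induction on `i`, conditioning on the first step. If `G₀ > y₁` then `τ = 0`, and both sides
agree because `y_i + i - 1 ≤ y₁`. Otherwise `τ ≥ 1`: shifting time by one step turns the weight
for `(i, Y)` into `(1-ρ)/ρ` times the weight for `(i - 1, (y₂, …, y_N))` of the walk restarted at
`G₁ = x + j`, which is independent of the first step `j`. By induction its expectation is the
right-hand side at `x + j`, and averaging over `j` is the hockey-stick identity
`∑_{n=k}^{m} C(n, k) = C(m+1, k+1)`. Working with lower integrals of the nonnegative weights
avoids any integrability argument.
-/

open MeasureTheory ProbabilityTheory
open scoped Classical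

def IsNegGeomWalk (ρ : ℝ) {Ω : Type*} [MeasurableSpace Ω] (μ : Measure Ω)
    (G : ℕ → Ω → ℤ) : Prop :=
  (∀ n, Measurable (G n)) ∧
  (∀ (n : ℕ) (j : ℤ), μ {ω | G (n + 1) ω - G n ω = j} =
      ENNReal.ofReal (if j ≤ -1 then ρ * (1 - ρ) ^ (-j - 1) else 0)) ∧
  iIndepFun (fun n : ℕ => fun ω => G (n + 1) ω - G n ω) μ

/-- The hitting time `τ`, with junk value `0` when the path `g` never exceeds `y`. -/
noncomputable def firstHit (y g : ℕ → ℤ) : ℕ := sInf {m | y m < g m}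

section firstHit

variable {y g h : ℕ → ℤ} {i m : ℕ}

lemma firstHit_le (hm : y m < g m) : firstHit y g ≤ m := Nat.sInf_le hm

lemma lt_apply_firstHit (hm : y m < g m) : y (firstHit y g) < g (firstHit y g) :=
  Nat.sInf_mem (s := {m | y m < g m}) ⟨m, hm⟩

lemma firstHit_eq_zero (h0 : y 0 < g 0) : firstHit y g = 0 :=
  Nat.eq_zero_of_le_zero (firstHit_le h0)

lemma firstHit_eq_succ (h0 : ¬ y 0 < g 0) (hm : y (m + 1) < g (m + 1)) :
    firstHit y g = firstHit (fun n => y (n + 1)) (fun n => g (n + 1)) + 1 := by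
  rw [firstHit, firstHit, Nat.sInf_def (s := {m | y m < g m}) ⟨m + 1, hm⟩,
    Nat.sInf_def (s := {n | y (n + 1) < g (n + 1)}) ⟨m, hm⟩]
  convert Nat.find_comp_succ (p := fun n => y n < g n) ⟨m + 1, hm⟩ ⟨m, hm⟩ h0 <;> exact Iff.rfl

lemma firstHit_congr (hgh : ∀ k < i, g k = h k) (hm : m < i) (hym : y m < g m) :
    firstHit y g = firstHit y h := by
  have hg_lt : firstHit y g < i := (firstHit_le hym).trans_lt hm
  have hg_mem := lt_apply_firstHit hym
  have hh_le : firstHit y h ≤ firstHit y g := firstHit_le (hgh _ hg_lt ▸ hg_mem)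
  have hh_mem := lt_apply_firstHit (hgh _ hg_lt ▸ hg_mem)
  exact le_antisymm (firstHit_le (hgh _ (hh_le.trans_lt hg_lt) ▸ hh_mem)) hh_le

end firstHit

/-- The weight `C(g_τ - y_i - 1, i - τ - 1) (1-ρ)^{g_τ} ((1-ρ)/ρ)^τ 1_{τ < i}` of a path `g`, where
`τ = firstHit y g` and `y_i` is `y (i - 1)`. -/
noncomputable def hitWeight (ρ : ℝ) (y : ℕ → ℤ) (i : ℕ) (g : ℕ → ℤ) : ℝ :=
  if _ : ∃ m, m < i ∧ y m < g m then
    ((g (firstHit y g) - y (i - 1) - 1).toNat.choose (i - firstHit y g - 1) : ℝ) *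
      (1 - ρ) ^ g (firstHit y g) * ((1 - ρ) / ρ) ^ firstHit y g
  else 0

section hitWeight

variable {ρ : ℝ} {y g h : ℕ → ℤ} {i : ℕ}

@[simp]
lemma hitWeight_zero : hitWeight ρ y 0 g = 0 := by
  simp [hitWeight]

lemma hitWeight_congr (hgh : ∀ m < i, g m = h m) : hitWeight ρ y i g = hitWeight ρ y i h := by
  have hex : (∃ m, m < i ∧ y m < g m) ↔ ∃ m, m < i ∧ y m < h m :=
    exists_congr fun m => and_congr_right fun hm => by rw [hgh m hm]
  unfold hitWeight
  by_cases hg : ∃ m, m < i ∧ y m < g m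
  · obtain ⟨m, hm, hym⟩ := hg
    rw [dif_pos ⟨m, hm, hym⟩, dif_pos (hex.1 ⟨m, hm, hym⟩), ← firstHit_congr hgh hm hym,
      hgh _ ((firstHit_le hym).trans_lt hm)]
  · rw [dif_neg hg, dif_neg (hex.not.1 hg)]

lemma hitWeight_of_lt (h0 : y 0 < g 0) (hi : 0 < i) :
    hitWeight ρ y i g = ((g 0 - y (i - 1) - 1).toNat.choose (i - 1) : ℝ) * (1 - ρ) ^ g 0 := by
  simp [hitWeight, dif_pos (⟨0, hi, h0⟩ : ∃ m, m < i ∧ y m < g m), firstHit_eq_zero h0]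

lemma hitWeight_succ_of_not_lt (h0 : ¬ y 0 < g 0) :
    hitWeight ρ y (i + 1) g =
      (1 - ρ) / ρ * hitWeight ρ (fun n => y (n + 1)) i (fun n => g (n + 1)) := by
  have hex : (∃ m, m < i + 1 ∧ y m < g m) ↔ ∃ m, m < i ∧ y (m + 1) < g (m + 1) := by
    constructor
    · rintro ⟨_ | m, hm, hym⟩
      · exact absurd hym h0
      · exact ⟨m, by omega, hym⟩
    · rintro ⟨m, hm, hym⟩
      exact ⟨m + 1, by omega, hym⟩
  unfold hitWeight
  by_cases hg : ∃ m, m < i ∧ y (m + 1) < g (m + 1)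
  · obtain ⟨m, hm, hym⟩ := hg
    have hi : i - 1 + 1 = i := Nat.sub_add_cancel (by omega)
    rw [dif_pos (hex.2 ⟨m, hm, hym⟩), dif_pos ⟨m, hm, hym⟩, firstHit_eq_succ h0 hym]
    dsimp only
    rw [hi, Nat.add_sub_cancel, Nat.add_sub_add_right, pow_succ]
    ring
  · rw [dif_neg (hex.not.2 hg), dif_neg hg, mul_zero]

lemma measurable_hitWeight : Measurable (hitWeight ρ y i) := by
  have hfactor : hitWeight ρ y i =
      (fun v : Fin i → ℤ => hitWeight ρ y i fun n => if hn : n < i then v ⟨n, hn⟩ else 0) ∘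
        fun g k => g k :=
    funext fun g => hitWeight_congr fun m hm => by simp [hm]
  rw [hfactor]
  exact (measurable_of_countable _).comp (measurable_pi_lambda _ fun k => measurable_pi_apply _)

lemma hitWeight_nonneg (hρ0 : 0 < ρ) (hρ1 : ρ < 1) : 0 ≤ hitWeight ρ y i g := by
  have : 0 < 1 - ρ := by linarith
  unfold hitWeight
  split_ifs <;> positivity

end hitWeight

noncomputable def geomStepProb (ρ : ℝ) (j : ℤ) : ℝ :=
  if j ≤ -1 then ρ * (1 - ρ) ^ (-j - 1) else 0

/-- With `c = y_i`, the martingale of the paper is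
`φ(n, g) = ((1-ρ)/ρ)^n * binomWeight ρ (i - n) c g`. -/
noncomputable def binomWeight (ρ : ℝ) (i : ℕ) (c x : ℤ) : ℝ :=
  if c + i ≤ x then ((x - c - 1).toNat.choose (i - 1) : ℝ) * (1 - ρ) ^ x else 0

section binomWeight

variable {ρ : ℝ} {i : ℕ} {c x : ℤ}

lemma geomStepProb_nonneg (hρ0 : 0 < ρ) (hρ1 : ρ < 1) (j : ℤ) : 0 ≤ geomStepProb ρ j := by
  have : 0 < 1 - ρ := by linarith
  unfold geomStepProb
  split_ifs <;> positivity

lemma binomWeight_nonneg (hρ1 : ρ < 1) : 0 ≤ binomWeight ρ i c x := by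
  have : 0 < 1 - ρ := by linarith
  unfold binomWeight
  split_ifs <;> positivity

lemma sum_Icc_toNat_choose (hi : 1 ≤ i) :
    ∑ j ∈ Finset.Icc (c + i - x) (-1), (x + j - c - 1).toNat.choose (i - 1) =
      if c + (i + 1 : ℕ) ≤ x then (x - c - 1).toNat.choose i else 0 := by
  split_ifs with hx
  · have hreindex : ∑ j ∈ Finset.Icc (c + i - x) (-1), (x + j - c - 1).toNat.choose (i - 1) =
        ∑ n ∈ Finset.Icc (i - 1) (x - c - 2).toNat, n.choose (i - 1) :=
      Finset.sum_nbij' (fun j => (x + j - c - 1).toNat) (fun n => n + c + 1 - x)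
        (fun j hj => by simp only [Finset.mem_Icc] at hj ⊢; omega)
        (fun n hn => by simp only [Finset.mem_Icc] at hn ⊢; omega)
        (fun j hj => by simp only [Finset.mem_Icc] at hj; omega)
        (fun n hn => by simp only [Finset.mem_Icc] at hn; omega)
        (fun _ _ => rfl)
    rw [hreindex, Nat.sum_Icc_choose]
    congr 1 <;> omega
  · rw [Finset.Icc_eq_empty (by push_cast at hx; omega), Finset.sum_empty]

/-- The martingale property `φ(n, g) = E[φ(n + 1, g + step)]`. -/
lemma hasSum_geomStepProb_mul_binomWeight (hρ0 : 0 < ρ) (hρ1 : ρ < 1) (hi : 1 ≤ i) :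
    HasSum (fun j : ℤ => (1 - ρ) / ρ * geomStepProb ρ j * binomWeight ρ i c (x + j))
      (binomWeight ρ (i + 1) c x) := by
  have hρ : 1 - ρ ≠ 0 := by linarith
  set s := Finset.Icc (c + i - x) (-1)
  have hterm : ∀ j ∈ s, (1 - ρ) / ρ * geomStepProb ρ j * binomWeight ρ i c (x + j) =
      ((x + j - c - 1).toNat.choose (i - 1) : ℝ) * (1 - ρ) ^ x := by
    intro j hj
    rw [Finset.mem_Icc] at hj
    have hpow : (1 - ρ) * (1 - ρ) ^ (-j - 1) * (1 - ρ) ^ (x + j) = (1 - ρ) ^ x := by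
      rw [← zpow_one_add₀ hρ, ← zpow_add₀ hρ]
      ring_nf
    rw [geomStepProb, if_pos hj.2, binomWeight, if_pos (by omega)]
    field_simp
    linear_combination ((x + j - c - 1).toNat.choose (i - 1) : ℝ) * hpow
  have hsupp : ∀ j ∉ s, (1 - ρ) / ρ * geomStepProb ρ j * binomWeight ρ i c (x + j) = 0 := by
    intro j hj
    rw [Finset.mem_Icc, not_and_or, not_le, not_le] at hj
    rcases hj with hj | hj
    · rw [binomWeight, if_neg (by omega), mul_zero]
    · rw [geomStepProb, if_neg (by omega), mul_zero, zero_mul]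
  have hsum : ∑ j ∈ s, (1 - ρ) / ρ * geomStepProb ρ j * binomWeight ρ i c (x + j) =
      binomWeight ρ (i + 1) c x := by
    rw [Finset.sum_congr rfl hterm, ← Finset.sum_mul, ← Nat.cast_sum, sum_Icc_toNat_choose hi,
      binomWeight, Nat.add_sub_cancel]
    split_ifs <;> simp
  exact hsum ▸ hasSum_sum_of_ne_finset_zero hsupp

end binomWeight

namespace IsNegGeomWalk

open scoped ENNReal

variable {ρ : ℝ} {Ω : Type*} [MeasurableSpace Ω] {μ : Measure Ω} {G : ℕ → Ω → ℤ}

lemma restart (hG : IsNegGeomWalk ρ μ G) (x : ℤ) :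
    IsNegGeomWalk ρ μ (fun n ω => x + (G (n + 1) ω - G 1 ω)) := by
  have hsteps : (fun n ω => x + (G (n + 1 + 1) ω - G 1 ω) - (x + (G (n + 1) ω - G 1 ω))) =
      fun n ω => G (n + 1 + 1) ω - G (n + 1) ω := by
    funext n ω; ring
  refine ⟨fun n => ((hG.1 _).sub (hG.1 1)).const_add x, fun n j => ?_, ?_⟩
  · simp only [add_sub_add_left_eq_sub, sub_sub_sub_cancel_right]
    exact hG.2.1 (n + 1) j
  · rw [hsteps]
    exact hG.2.2.precomp (g := Nat.succ) Nat.succ_injective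

lemma indepFun_step_zero_increments (hG : IsNegGeomWalk ρ μ G) :
    IndepFun (fun ω => G 1 ω - G 0 ω) (fun ω n => G (n + 1) ω - G 1 ω) μ := by
  set X : ℕ → Ω → ℤ := fun n ω => G (n + 1) ω - G n ω
  have hX : ∀ n, Measurable (X n) := fun n => (hG.1 _).sub (hG.1 n)
  have hindep := indep_iSup_of_disjoint (fun n => (hX n).comap_le)
    ((iIndepFun_iff_iIndep _ _ _).1 hG.2.2) (S := {0}) (T := Set.Ici 1) (by simp)
  set mTail : MeasurableSpace Ω := ⨆ k ∈ Set.Ici 1, MeasurableSpace.comap (X k) inferInstance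
  have hincr : Measurable[mTail] (fun ω n => G (n + 1) ω - G 1 ω) := by
    refine @measurable_pi_lambda Ω ℕ (fun _ => ℤ) mTail _ _ fun n => ?_
    have hsum : (fun ω => G (n + 1) ω - G 1 ω) = fun ω => ∑ k ∈ Finset.range n, X (k + 1) ω :=
      funext fun ω => (Finset.sum_range_sub (fun k => G (k + 1) ω) n).symm
    rw [hsum]
    exact Finset.measurable_sum _ fun k _ =>
      (comap_measurable (X (k + 1))).mono
        (le_iSup₂ (f := fun k (_ : k ∈ Set.Ici 1) => MeasurableSpace.comap (X k) inferInstance)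
          (k + 1) (Set.mem_Ici.2 (Nat.le_add_left 1 k))) le_rfl
  rw [IndepFun_iff_Indep]
  exact indep_of_indep_of_le hindep (le_iSup₂_of_le 0 rfl le_rfl) hincr.comap_le

/-- First-step decomposition: given its first step `j`, the walk continues as a fresh walk
started at `x + j`, independent of `j`. -/
lemma lintegral_comp_succ (hG : IsNegGeomWalk ρ μ G) {x : ℤ} (hstart : ∀ ω, G 0 ω = x)
    {F : (ℕ → ℤ) → ℝ≥0∞} (hF : Measurable F) :
    ∫⁻ ω, F (fun n => G (n + 1) ω) ∂μ = ∑' j : ℤ, ENNReal.ofReal (geomStepProb ρ j) *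
      ∫⁻ ω, F (fun n => x + j + (G (n + 1) ω - G 1 ω)) ∂μ := by
  set s : ℤ → Set Ω := fun j => {ω | G 1 ω - G 0 ω = j}
  have hs : ∀ j, MeasurableSet (s j) := fun j =>
    ((hG.1 1).sub (hG.1 0)) (measurableSet_singleton j)
  have hdisj : Pairwise (Function.onFun Disjoint s) := fun a b hab =>
    Set.disjoint_left.2 fun ω ha hb => hab (ha.symm.trans hb)
  have hcover : ⋃ j, s j = Set.univ := Set.iUnion_eq_univ_iff.2 fun ω => ⟨_, rfl⟩
  have hpiece : ∀ j, ∫⁻ ω in s j, F (fun n => G (n + 1) ω) ∂μ = ENNReal.ofReal (geomStepProb ρ j) *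
      ∫⁻ ω, F (fun n => x + j + (G (n + 1) ω - G 1 ω)) ∂μ := by
    intro j
    have hpath : Set.EqOn (fun ω => F (fun n => G (n + 1) ω))
        (fun ω => F (fun n => x + j + (G (n + 1) ω - G 1 ω))) (s j) := fun ω hω => by
      have : G 1 ω = x + j := by rw [← hstart ω, ← hω.out]; ring
      simp only [this, add_sub_cancel]
    have hindep : IndepFun ((s j).indicator 1)
        (fun ω => F (fun n => x + j + (G (n + 1) ω - G 1 ω))) μ :=
      hG.indepFun_step_zero_increments.comp
      (measurable_one.indicator (measurableSet_singleton j) :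
        Measurable (({j} : Set ℤ).indicator (1 : ℤ → ℝ≥0∞)))
      (hF.comp (measurable_const.add measurable_id) : Measurable fun v : ℕ → ℤ => F (x + j + v))
    have hprod : (s j).indicator (fun ω => F (fun n => x + j + (G (n + 1) ω - G 1 ω))) =
        (s j).indicator 1 * fun ω => F (fun n => x + j + (G (n + 1) ω - G 1 ω)) := by
      funext ω
      by_cases hω : ω ∈ s j <;> simp [hω]
    have hmeas : Measurable fun ω => F (fun n => x + j + (G (n + 1) ω - G 1 ω)) :=
      hF.comp (measurable_pi_lambda _ fun n => ((hG.1 _).sub (hG.1 1)).const_add _)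
    rw [setLIntegral_congr_fun (hs j) hpath, ← lintegral_indicator (hs j), hprod,
      lintegral_mul_eq_lintegral_mul_lintegral_of_indepFun (measurable_one.indicator (hs j))
        hmeas hindep, lintegral_indicator_one (hs j), hG.2.1 0 j]
    rfl
  rw [← setLIntegral_univ, ← hcover, lintegral_iUnion hs hdisj]
  exact tsum_congr hpiece

end IsNegGeomWalk

lemma add_le_apply_zero {y : ℕ → ℤ} {n m : ℕ} (hy : ∀ k, k + 1 < n → y (k + 1) < y k)
    (hm : m < n) : y m + m ≤ y 0 := by
  induction m with
  | zero => simp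
  | succ m ih =>
    have h₁ := hy m hm
    have h₂ := ih (by omega)
    push_cast
    omega

section lintegral

open scoped ENNReal

variable {ρ : ℝ} {Ω : Type*} [MeasurableSpace Ω] {μ : Measure Ω} [IsProbabilityMeasure μ]
  {G : ℕ → Ω → ℤ} {y : ℕ → ℤ} {x : ℤ} {i : ℕ}

lemma lintegral_hitWeight_of_lt (hi : 1 ≤ i) (hy : ∀ m, m + 1 < i → y (m + 1) < y m)
    (hstart : ∀ ω, G 0 ω = x) (hx : y 0 < x) :
    ∫⁻ ω, ENNReal.ofReal (hitWeight ρ y i fun n => G n ω) ∂μ =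
      ENNReal.ofReal (binomWeight ρ i (y (i - 1)) x) := by
  have hyi : y (i - 1) + i ≤ x := by
    have := add_le_apply_zero hy (Nat.sub_lt hi one_pos)
    push_cast [hi] at this
    omega
  have hconst : ∀ ω, hitWeight ρ y i (fun n => G n ω) = binomWeight ρ i (y (i - 1)) x := by
    intro ω
    rw [hitWeight_of_lt (by rwa [hstart]) hi, hstart, binomWeight, if_pos hyi]
  simp only [hconst, lintegral_const, measure_univ, mul_one]

lemma lintegral_hitWeight (hρ0 : 0 < ρ) (hρ1 : ρ < 1) (hi : 1 ≤ i) (hG : IsNegGeomWalk ρ μ G)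
    (hy : ∀ m, m + 1 < i → y (m + 1) < y m) (hstart : ∀ ω, G 0 ω = x) :
    ∫⁻ ω, ENNReal.ofReal (hitWeight ρ y i fun n => G n ω) ∂μ =
      ENNReal.ofReal (binomWeight ρ i (y (i - 1)) x) := by
  induction i, hi using Nat.le_induction generalizing G y x with
  | base =>
    by_cases hx : y 0 < x
    · exact lintegral_hitWeight_of_lt le_rfl hy hstart hx
    · have hzero : ∀ ω, hitWeight ρ y 1 (fun n => G n ω) = 0 := fun ω => by
        rw [hitWeight_succ_of_not_lt (by rwa [hstart]), hitWeight_zero, mul_zero]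
      simp [hzero, binomWeight, hx]
  | succ i hi ih =>
    by_cases hx : y 0 < x
    · exact lintegral_hitWeight_of_lt (by omega) hy hstart hx
    have hq : 0 ≤ (1 - ρ) / ρ := div_nonneg (by linarith) hρ0.le
    have hshift : ∀ ω, ENNReal.ofReal (hitWeight ρ y (i + 1) fun n => G n ω) =
        ENNReal.ofReal ((1 - ρ) / ρ) *
          ENNReal.ofReal (hitWeight ρ (fun n => y (n + 1)) i fun n => G (n + 1) ω) := by
      intro ω
      rw [hitWeight_succ_of_not_lt (by rwa [hstart]), ENNReal.ofReal_mul hq]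
    have hrestart : ∀ j : ℤ,
        ∫⁻ ω, ENNReal.ofReal (hitWeight ρ (fun n => y (n + 1)) i
          fun n => x + j + (G (n + 1) ω - G 1 ω)) ∂μ =
        ENNReal.ofReal (binomWeight ρ i (y i) (x + j)) := by
      intro j
      rw [ih (x := x + j) (hG.restart (x + j)) (fun m hm => hy (m + 1) (by omega))
        (fun ω => by simp), Nat.sub_add_cancel hi]
    calc ∫⁻ ω, ENNReal.ofReal (hitWeight ρ y (i + 1) fun n => G n ω) ∂μ
        = ENNReal.ofReal ((1 - ρ) / ρ) *
            ∫⁻ ω, ENNReal.ofReal (hitWeight ρ (fun n => y (n + 1)) i fun n => G (n + 1) ω) ∂μ := by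
          simp_rw [hshift]
          exact lintegral_const_mul' _ _ ENNReal.ofReal_ne_top
      _ = ∑' j : ℤ,
            ENNReal.ofReal ((1 - ρ) / ρ * geomStepProb ρ j * binomWeight ρ i (y i) (x + j)) := by
          rw [hG.lintegral_comp_succ hstart
              (F := fun g => ENNReal.ofReal (hitWeight ρ (fun n => y (n + 1)) i g))
              (ENNReal.measurable_ofReal.comp measurable_hitWeight),
            ← ENNReal.tsum_mul_left]
          refine tsum_congr fun j => ?_
          rw [hrestart, ENNReal.ofReal_mul (mul_nonneg hq (geomStepProb_nonneg hρ0 hρ1 j)),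
            ENNReal.ofReal_mul hq, mul_assoc]
      _ = ENNReal.ofReal (binomWeight ρ (i + 1) (y (i + 1 - 1)) x) := by
          have hsum := hasSum_geomStepProb_mul_binomWeight (c := y i) (x := x) hρ0 hρ1 hi
          rw [← ENNReal.ofReal_tsum_of_nonneg (fun j => by
              have := geomStepProb_nonneg hρ0 hρ1 j
              have := binomWeight_nonneg (i := i) (c := y i) (x := x + j) hρ1
              positivity) hsum.summable,
            hsum.tsum_eq, Nat.add_sub_cancel]

end lintegral

theorem statement8_general (ρ : ℝ) (h0 : 0 < ρ) (h1 : ρ < 1)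
    {Ω : Type*} [MeasurableSpace Ω] (μ : Measure Ω) [IsProbabilityMeasure μ]
    (G : ℕ → Ω → ℤ) (hG : IsNegGeomWalk ρ μ G)
    (N : ℕ) (y : ℕ → ℤ)
    (hy : ∀ m, m + 1 < N → y (m + 1) < y m)
    (x : ℤ) (hstart : ∀ ω, G 0 ω = x)
    (i : ℕ) (hi1 : 1 ≤ i) (hiN : i ≤ N) :
    ∫ ω, (if _ : ∃ m, m < i ∧ y m < G m ω then
        (((G (sInf {m | y m < G m ω}) ω - y (i - 1) - 1).toNat.choose
            (i - sInf {m | y m < G m ω} - 1) : ℝ)) *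
          (1 - ρ) ^ (G (sInf {m | y m < G m ω}) ω) *
          ((1 - ρ) / ρ) ^ (sInf {m | y m < G m ω})
      else 0) ∂μ =
    (if y (i - 1) + i ≤ x then
        ((x - y (i - 1) - 1).toNat.choose (i - 1) : ℝ) * (1 - ρ) ^ x
      else 0) := by
  change ∫ ω, hitWeight ρ y i (fun n => G n ω) ∂μ = binomWeight ρ i (y (i - 1)) x
  have hW : Measurable fun ω => hitWeight ρ y i fun n => G n ω :=
    measurable_hitWeight.comp (measurable_pi_lambda _ hG.1)
  rw [integral_eq_lintegral_of_nonneg_ae (ae_of_all _ fun _ => hitWeight_nonneg h0 h1)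
      hW.aestronglyMeasurable,
    lintegral_hitWeight h0 h1 hi1 hG (fun m hm => hy m (by omega)) hstart,
    ENNReal.toReal_ofReal (binomWeight_nonneg h1)]

/-- optional-stopping identity.  Here `y k` denotes `y_{k+1}` (0-based), so
`Y = (y_1,…,y_N)` is strictly decreasing, `τ = min{m ≥ 0 : G_m > y_{m+1}}`, and for
`1 ≤ i ≤ N` and start `G_0 = x`,
`E[ C(G_τ−y_i−1, i−τ−1) (1−ρ)^{G_τ} ((1−ρ)/ρ)^τ 1_{τ<i} ]
  = 1_{x ≥ y_i+i} C(x−y_i−1, i−1) (1−ρ)^x`. -/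
theorem statement8 (ρ : ℝ) (h0 : 0 < ρ) (h1 : ρ < 1)
    {Ω : Type*} [MeasurableSpace Ω] (μ : Measure Ω) [IsProbabilityMeasure μ]
    (G : ℕ → Ω → ℤ) (hG : IsNegGeomWalk ρ μ G)
    (N : ℕ) (hN : 1 ≤ N) (y : ℕ → ℤ)
    (hy : ∀ m, m + 1 < N → y (m + 1) < y m)
    (x : ℤ) (hstart : ∀ ω, G 0 ω = x)
    (i : ℕ) (hi1 : 1 ≤ i) (hiN : i ≤ N) :
    ∫ ω, (if _ : ∃ m, m < i ∧ y m < G m ω then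
        (((G (sInf {m | y m < G m ω}) ω - y (i - 1) - 1).toNat.choose
            (i - sInf {m | y m < G m ω} - 1) : ℝ)) *
          (1 - ρ) ^ (G (sInf {m | y m < G m ω}) ω) *
          ((1 - ρ) / ρ) ^ (sInf {m | y m < G m ω})
      else 0) ∂μ =
    (if y (i - 1) + i ≤ x then
        ((x - y (i - 1) - 1).toNat.choose (i - 1) : ℝ) * (1 - ρ) ^ x
      else 0) :=
  statement8_general ρ h0 h1 μ G hG N y hy x hstart i hi1 hiN
end

section
/- Let P be the N×N upper-triangular matrix with entries P(i,j) = ∮_0 v^{i−j}(v+1)^{y_j+j} F(v) dv/(2πi v), where F is analytic at 0 with F(0)=1 and the contour is a small circle around 0. Then P is invertible, and its inverse is given by P^{-1}(i,j) = ∮_0 e_i(v) v^{−j} F(v)^{−1} dv/(2πi), where {e_i}_{1≤i≤N} is the unique family of polynomials with deg e_i < N, e_i(v) = Σ_{j=i}^N c_{i,j} v^{j−1}, satisfying the biorthogonality ∮_0 e_i(v) v^{−j} (v+1)^{y_j+j} dv/(2πi) = δ_{ij} for 1 ≤ i,j ≤ N. -/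
/-!
Write `c_n(f) = (2πi)⁻¹ ∮ f(v) v^{-n-1} dv` for the `n`-th Laurent coefficient at `0`. For `f`
holomorphic on the closed disc it vanishes when `n < 0` and equals `f⁽ⁿ⁾(0)/n!` otherwise, so
`c_n(fg) = ∑_{k ≤ n} c_k(f) c_{n-k}(g)` by the Leibniz rule. With `u_i = e_i/F` and
`w_j = (v+1)^{y_j+j+1} F` we have `P_{kj} = c_{j-k}(w_j)` and `Q_{ik} = c_k(u_i)`, so
`(QP)_{ij} = c_j(u_i w_j) = c_j(e_i (v+1)^{y_j+j+1}) = δ_{ij}`; a one-sided inverse of a square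
matrix is two-sided. Any other biorthogonal family `e'` gives `Q' P = 1`, hence `Q' = Q`, and the
first `N` Taylor coefficients of `e'_i = (e'_i/F)·F` are then those of `e_i`.
-/

open Complex Metric Finset Polynomial
open scoped Nat

noncomputable def circleCoeff (r : ℝ) (f : ℂ → ℂ) (n : ℤ) : ℂ :=
  (2 * Real.pi * I)⁻¹ * ∮ v in C(0, r), f v * v ^ (-n - 1)

theorem iteratedDeriv_polynomial_eval {𝕜 : Type*} [NontriviallyNormedField 𝕜] (p : 𝕜[X])
    (k : ℕ) : iteratedDeriv k (fun x => p.eval x) = fun x => (derivative^[k] p).eval x := by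
  induction k with
  | zero => simp
  | succ k ih =>
    funext x
    rw [iteratedDeriv_succ, ih, Function.iterate_succ_apply', Polynomial.deriv]

theorem differentiableOn_add_one_zpow {r : ℝ} (hr : r < 1) (m : ℤ) :
    DifferentiableOn ℂ (fun v : ℂ => (v + 1) ^ m) (closedBall 0 r) :=
  (differentiableOn_id.add_const 1).zpow <| Or.inl fun v hv h => by
    rw [mem_closedBall, dist_zero_right, eq_neg_of_add_eq_zero_left h, norm_neg, norm_one] at hv
    linarith

section circleCoeff

variable {r : ℝ} {f g : ℂ → ℂ}

theorem circleCoeff_congr (hr : 0 ≤ r) (h : Set.EqOn f g (sphere 0 r)) (n : ℤ) :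
    circleCoeff r f n = circleCoeff r g n := by
  rw [circleCoeff, circleCoeff, circleIntegral.integral_congr hr fun v hv => by rw [h hv]]

theorem circleCoeff_of_neg (hr : 0 ≤ r) (hf : DifferentiableOn ℂ f (closedBall 0 r)) {n : ℤ}
    (hn : n < 0) : circleCoeff r f n = 0 := by
  have hd : DifferentiableOn ℂ (fun v => f v * v ^ (-n - 1)) (closedBall 0 r) :=
    hf.mul fun v _ => (differentiableAt_zpow.2 (Or.inr (by omega))).differentiableWithinAt
  rw [circleCoeff, mul_eq_zero_of_right _
    ((hd.mono closure_ball_subset_closedBall).diffContOnCl.circleIntegral_eq_zero hr)]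

theorem circleCoeff_natCast (hr : 0 < r) (hf : DifferentiableOn ℂ f (closedBall 0 r)) (n : ℕ) :
    circleCoeff r f n = iteratedDeriv n f 0 / n ! := by
  have hintegrand :
      (fun v => f v * v ^ (-(n : ℤ) - 1)) = fun v => (1 / (v - 0) ^ (n + 1)) • f v := by
    funext v
    rw [sub_zero, smul_eq_mul, show -(n : ℤ) - 1 = -((n + 1 : ℕ) : ℤ) by push_cast; ring,
      zpow_neg, zpow_natCast, one_div, mul_comm]
  rw [circleCoeff, hintegrand, hf.circleIntegral_one_div_sub_center_pow_smul hr n, smul_eq_mul]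
  field_simp

theorem circleCoeff_mul_eq_sum_range (hr : 0 < r) (hf : DifferentiableOn ℂ f (closedBall 0 r))
    (hg : DifferentiableOn ℂ g (closedBall 0 r)) (n : ℕ) :
    circleCoeff r (f * g) n =
      ∑ k ∈ range (n + 1), circleCoeff r f k * circleCoeff r g (n - k : ℕ) := by
  have hnhds : closedBall (0 : ℂ) r ∈ nhds 0 := closedBall_mem_nhds 0 hr
  rw [circleCoeff_natCast hr (hf.mul hg), iteratedDeriv_mul (hf.analyticAt hnhds).contDiffAt
    (hg.analyticAt hnhds).contDiffAt, sum_div]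
  refine sum_congr rfl fun k hk => ?_
  rw [circleCoeff_natCast hr hf, circleCoeff_natCast hr hg,
    Nat.cast_choose ℂ (Nat.le_of_lt_succ (mem_range.1 hk))]
  field_simp [Nat.factorial_ne_zero]

theorem circleCoeff_mul_eq_sum_fin (hr : 0 < r) (hf : DifferentiableOn ℂ f (closedBall 0 r))
    (hg : DifferentiableOn ℂ g (closedBall 0 r)) {n N : ℕ} (hn : n < N) :
    circleCoeff r (f * g) n = ∑ k : Fin N, circleCoeff r f k * circleCoeff r g (n - k) := by
  have hvanish : ∀ k ∈ range N, k ∉ range (n + 1) →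
      circleCoeff r f k * circleCoeff r g (n - k) = 0 := fun k _ hk => by
    rw [circleCoeff_of_neg hr.le hg (by simp only [mem_range] at hk; omega), mul_zero]
  rw [Fin.sum_univ_eq_sum_range (fun k => circleCoeff r f k * circleCoeff r g (n - k)),
    ← sum_subset (range_subset_range.2 hn) hvanish, circleCoeff_mul_eq_sum_range hr hf hg]
  refine sum_congr rfl fun k hk => ?_
  rw [Nat.cast_sub (Nat.le_of_lt_succ (mem_range.1 hk))]

theorem circleCoeff_polynomial_eval (hr : 0 < r) (p : ℂ[X]) (n : ℕ) :
    circleCoeff r (fun v => p.eval v) n = p.coeff n := by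
  rw [circleCoeff_natCast hr p.differentiable.differentiableOn, iteratedDeriv_polynomial_eval]
  beta_reduce
  rw [← coeff_zero_eq_eval_zero, coeff_iterate_derivative, zero_add, Nat.descFactorial_self,
    nsmul_eq_mul, mul_div_cancel_left₀ _ (Nat.cast_ne_zero.2 n.factorial_ne_zero)]

theorem circleCoeff_matrix_mul {N : ℕ} (hr : 0 < r) {u w : Fin N → ℂ → ℂ}
    (hu : ∀ i, DifferentiableOn ℂ (u i) (closedBall 0 r))
    (hw : ∀ j, DifferentiableOn ℂ (w j) (closedBall 0 r)) :
    (Matrix.of fun i k : Fin N => circleCoeff r (u i) k) *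
        Matrix.of (fun k j : Fin N => circleCoeff r (w j) (j - k)) =
      Matrix.of fun i j => circleCoeff r (u i * w j) j := by
  ext i j
  rw [Matrix.mul_apply, Matrix.of_apply, circleCoeff_mul_eq_sum_fin hr (hu i) (hw j) j.isLt]
  rfl

theorem Polynomial.eq_of_circleCoeff_div_eq (hr : 0 < r) {F : ℂ → ℂ}
    (hF : DifferentiableOn ℂ F (closedBall 0 r)) (hF0 : ∀ v ∈ closedBall 0 r, F v ≠ 0)
    {N : ℕ} {p q : ℂ[X]} (hp : p.degree < N) (hq : q.degree < N)
    (h : ∀ k : Fin N, circleCoeff r (fun v => p.eval v / F v) k =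
      circleCoeff r (fun v => q.eval v / F v) k) : p = q := by
  have hcoeff : ∀ (s : ℂ[X]) {m : ℕ}, m < N → s.coeff m =
      ∑ k : Fin N, circleCoeff r (fun v => s.eval v / F v) k * circleCoeff r F (m - k) := by
    intro s m hm
    rw [← circleCoeff_polynomial_eval hr, ← circleCoeff_mul_eq_sum_fin hr
      (f := fun v => s.eval v / F v) (s.differentiable.differentiableOn.div hF hF0) hF hm]
    refine circleCoeff_congr hr.le (fun v hv => ?_) _
    simp [div_mul_cancel₀ _ (hF0 v (sphere_subset_closedBall hv))]
  ext m
  rcases lt_or_ge m N with hm | hm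
  · simp only [hcoeff p hm, hcoeff q hm, h]
  · have hmN : ((N : ℕ) : WithBot ℕ) ≤ m := by exact_mod_cast hm
    rw [coeff_eq_zero_of_degree_lt (hp.trans_le hmN), coeff_eq_zero_of_degree_lt (hq.trans_le hmN)]

theorem circleCoeff_eq_circleIntegral_zpow_sub_div (hr : 0 < r) (f g : ℂ → ℂ) (k j : ℤ) :
    (2 * Real.pi * I)⁻¹ * (∮ v in C(0, r), v ^ (k - j) * f v * g v / v) =
      circleCoeff r (fun v => f v * g v) (j - k) := by
  rw [circleCoeff]
  congr 1
  refine circleIntegral.integral_congr hr.le fun v hv => ?_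
  rw [show -(j - k) - 1 = k - j - 1 by ring, zpow_sub_one₀ (ne_of_mem_sphere hv hr.ne')]
  ring

theorem circleCoeff_div_matrix_mul_eq_one {N : ℕ} (hr : 0 < r) {F : ℂ → ℂ}
    (hF : DifferentiableOn ℂ F (closedBall 0 r)) (hF0 : ∀ v ∈ closedBall 0 r, F v ≠ 0)
    {G : Fin N → ℂ → ℂ} (hG : ∀ j, DifferentiableOn ℂ (G j) (closedBall 0 r))
    {e : Fin N → ℂ[X]}
    (he : ∀ i j, circleCoeff r (fun v => (e i).eval v * G j v) j = if i = j then 1 else 0) :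
    (Matrix.of fun i k : Fin N => circleCoeff r (fun v => (e i).eval v / F v) k) *
        Matrix.of (fun k j : Fin N => circleCoeff r (fun v => G j v * F v) (j - k)) = 1 := by
  refine (circleCoeff_matrix_mul hr (u := fun i v => (e i).eval v / F v)
    (fun i => (e i).differentiable.differentiableOn.div hF hF0) fun j => (hG j).mul hF).trans ?_
  ext i j
  rw [Matrix.of_apply, Matrix.one_apply, ← he i j]
  refine circleCoeff_congr hr.le (fun v hv => ?_) _
  simp only [Pi.mul_apply]
  field_simp [hF0 v (sphere_subset_closedBall hv)]

end circleCoeff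

theorem statement10_general (N : ℕ) (y : Fin N → ℤ)
    (F : ℂ → ℂ)
    (r : ℝ) (hr : 0 < r) (hr1 : r < 1)
    (hFan : ∀ v ∈ Metric.closedBall (0 : ℂ) r, AnalyticAt ℂ F v)
    (hFne : ∀ v ∈ Metric.closedBall (0 : ℂ) r, F v ≠ 0)
    (e : Fin N → Polynomial ℂ)
    (hdeg : ∀ i, (e i).degree < (N : ℕ))
    (hbi : ∀ i j : Fin N,
      (2 * Real.pi * Complex.I)⁻¹ *
        circleIntegral (fun v => (e i).eval v * v ^ (-(j : ℤ) - 1) *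
          (v + 1) ^ (y j + (j : ℤ) + 1)) 0 r = if i = j then 1 else 0) :
    let P : Matrix (Fin N) (Fin N) ℂ := Matrix.of fun i j =>
      (2 * Real.pi * Complex.I)⁻¹ *
        circleIntegral (fun v => v ^ ((i : ℤ) - (j : ℤ)) *
          (v + 1) ^ (y j + (j : ℤ) + 1) * F v / v) 0 r
    let Q : Matrix (Fin N) (Fin N) ℂ := Matrix.of fun i j =>
      (2 * Real.pi * Complex.I)⁻¹ *
        circleIntegral (fun v => (e i).eval v * v ^ (-(j : ℤ) - 1) / F v) 0 r
    P * Q = 1 ∧ Q * P = 1 ∧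
    (∀ e' : Fin N → Polynomial ℂ,
      (∀ i, (e' i).degree < (N : ℕ)) →
      (∀ i : Fin N, ∀ k, k < (i : ℕ) → (e' i).coeff k = 0) →
      (∀ i j : Fin N,
        (2 * Real.pi * Complex.I)⁻¹ *
          circleIntegral (fun v => (e' i).eval v * v ^ (-(j : ℤ) - 1) *
            (v + 1) ^ (y j + (j : ℤ) + 1)) 0 r = if i = j then 1 else 0) →
      e' = e) := by
  intro P Q
  set inv : (Fin N → ℂ[X]) → Matrix (Fin N) (Fin N) ℂ := fun e =>
    Matrix.of fun i k => circleCoeff r (fun v => (e i).eval v / F v) k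
  have hF : DifferentiableOn ℂ F (closedBall 0 r) := fun v hv =>
    (hFan v hv).differentiableWithinAt
  have hP : P = Matrix.of fun k j : Fin N =>
      circleCoeff r (fun v => (v + 1) ^ (y j + (j : ℤ) + 1) * F v) (j - k) := by
    ext k j
    exact circleCoeff_eq_circleIntegral_zpow_sub_div hr _ _ _ _
  have hinvP : ∀ e' : Fin N → ℂ[X], (∀ i j : Fin N,
      (2 * Real.pi * Complex.I)⁻¹ * circleIntegral (fun v => (e' i).eval v *
        v ^ (-(j : ℤ) - 1) * (v + 1) ^ (y j + (j : ℤ) + 1)) 0 r = if i = j then 1 else 0) →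
      inv e' * P = 1 :=
    fun e' hbi' => hP ▸ circleCoeff_div_matrix_mul_eq_one hr hF hFne
      (fun j => differentiableOn_add_one_zpow hr1 _)
      (by simpa only [circleCoeff, mul_right_comm] using hbi')
  have hQ : Q = inv e := by
    ext i k
    simp only [Q, inv, Matrix.of_apply, circleCoeff, mul_div_right_comm]
  have QP : Q * P = 1 := hQ ▸ hinvP e hbi
  have PQ : P * Q = 1 := mul_eq_one_comm.1 QP
  refine ⟨PQ, QP, fun e' hdeg' _ hbi' => funext fun i => ?_⟩
  have hinv : inv e' = inv e := by
    calc inv e' = inv e' * P * Q := by rw [Matrix.mul_assoc, PQ, Matrix.mul_one]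
      _ = inv e := by rw [hinvP e' hbi', Matrix.one_mul, hQ]
  exact Polynomial.eq_of_circleCoeff_div_eq hr hF hFne (hdeg' i) (hdeg i)
    fun k => congrFun (congrFun hinv i) k

/-- the matrix `P(i,j) = ∮_0 v^{i−j}(v+1)^{y_j+j} F(v) dv/(2πi v)` (over a
small circle of radius `r` around `0`, `F` analytic and nonvanishing there with `F(0)=1`)
is invertible with inverse `P⁻¹(i,j) = ∮_0 e_i(v) v^{−j} F(v)⁻¹ dv/(2πi)`, where
`{e_i}` is the unique family of polynomials with `deg e_i < N`,
`e_i(v) = Σ_{j=i}^N c_{i,j} v^{j−1}` (i.e. the low-order coefficients vanish), satisfying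
the biorthogonality `∮_0 e_i(v) v^{−j}(v+1)^{y_j+j} dv/(2πi) = δ_{ij}`.
Indices here are 0-based: row/column `i` corresponds to the paper's `i+1`. -/
theorem statement10 (N : ℕ) (hN : 0 < N) (y : Fin N → ℤ)
    (F : ℂ → ℂ) (hF0 : F 0 = 1)
    (r : ℝ) (hr : 0 < r) (hr1 : r < 1)
    (hFan : ∀ v ∈ Metric.closedBall (0 : ℂ) r, AnalyticAt ℂ F v)
    (hFne : ∀ v ∈ Metric.closedBall (0 : ℂ) r, F v ≠ 0)
    (e : Fin N → Polynomial ℂ)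
    (hdeg : ∀ i, (e i).degree < (N : ℕ))
    (hstruct : ∀ i : Fin N, ∀ k, k < (i : ℕ) → (e i).coeff k = 0)
    (hbi : ∀ i j : Fin N,
      (2 * Real.pi * Complex.I)⁻¹ *
        circleIntegral (fun v => (e i).eval v * v ^ (-(j : ℤ) - 1) *
          (v + 1) ^ (y j + (j : ℤ) + 1)) 0 r = if i = j then 1 else 0) :
    let P : Matrix (Fin N) (Fin N) ℂ := Matrix.of fun i j =>
      (2 * Real.pi * Complex.I)⁻¹ *
        circleIntegral (fun v => v ^ ((i : ℤ) - (j : ℤ)) *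
          (v + 1) ^ (y j + (j : ℤ) + 1) * F v / v) 0 r
    let Q : Matrix (Fin N) (Fin N) ℂ := Matrix.of fun i j =>
      (2 * Real.pi * Complex.I)⁻¹ *
        circleIntegral (fun v => (e i).eval v * v ^ (-(j : ℤ) - 1) / F v) 0 r
    P * Q = 1 ∧ Q * P = 1 ∧
    (∀ e' : Fin N → Polynomial ℂ,
      (∀ i, (e' i).degree < (N : ℕ)) →
      (∀ i : Fin N, ∀ k, k < (i : ℕ) → (e' i).coeff k = 0) →
      (∀ i j : Fin N,
        (2 * Real.pi * Complex.I)⁻¹ *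
          circleIntegral (fun v => (e' i).eval v * v ^ (-(j : ℤ) - 1) *
            (v + 1) ^ (y j + (j : ℤ) + 1)) 0 r = if i = j then 1 else 0) →
      e' = e) :=
  statement10_general N y F r hr hr1 hFan hFne e hdeg hbi
end

section
/- Let N < L, ρ = N/L, and |z| < r_0 = ρ^ρ(1−ρ)^{1−ρ}. For the initial configuration Y = (y_1,…,y_N) ∈ X_N(L) and its cyclic shift Ŷ defined by ŷ_i = y_{i+k} + c for 1 ≤ i ≤ N−k and ŷ_i = y_{i+k−N} − L + c for N−k+1 ≤ i ≤ N (where 1 ≤ k ≤ N, c ∈ ℤ), and for any w_1,…,w_N ∈ S_z (Bethe roots, so w^N(w+1)^{L−N} = z^L for each), one has det[w_i^{−j}(w_i+1)^{ŷ_j+j}]_{i,j=1}^N = det[w_i^{−j}(w_i+1)^{y_j+j}]_{i,j=1}^N · (−1)^{k(N−k)} z^{−kL} ∏_{j=1}^N w_j^k (w_j+1)^{−k+c}. -/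
/-!
Writing `σ` for the `k`-th power of the cyclic rotation of `Fin N`, column `j` of the shifted
matrix is column `σ j` of the original one multiplied by `w_i^k (w_i+1)^{c-k}` in row `i` and,
when the index wraps around (`j + k ≥ N`, which happens for exactly `k` columns), additionally
by `w_i^{-N} (w_i+1)^{N-L}`. For a Bethe root the latter factor is `z^{-L}`, independent of
`i`, so it becomes a column factor. The determinant then picks up the row factors, `z^{-kL}`
and the sign `(-1)^{(N-1)k} = (-1)^{k(N-k)}` of `σ`.
-/

open Equiv Finset

lemma val_finRotate_apply {n : ℕ} (i : Fin n) : (finRotate n i : ℕ) = (i + 1) % n := by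
  have := i.neZero
  rw [finRotate_apply, Fin.val_add, Fin.val_one', Nat.add_mod_mod]

lemma val_finRotate_pow_apply {n : ℕ} (k : ℕ) (i : Fin n) :
    ((finRotate n ^ k) i : ℕ) = (i + k) % n := by
  induction k with
  | zero => simp [Nat.mod_eq_of_lt i.isLt]
  | succ k ih =>
    rw [pow_succ', Perm.mul_apply, val_finRotate_apply, ih, Nat.mod_add_mod, add_assoc]

lemma sign_finRotate_pow {n k : ℕ} (hk : k ≤ n) :
    Perm.sign (finRotate n ^ k) = (-1) ^ (k * (n - k)) := by
  rw [map_pow, sign_finRotate, ← pow_mul]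
  rcases k with _ | k
  · simp
  obtain ⟨m, rfl⟩ : ∃ m, n = k + 1 + m := ⟨n - (k + 1), by omega⟩
  have hexp : (k + 1 + m - 1) * (k + 1) = (k + 1) * (k + 1 + m - (k + 1)) + k * (k + 1) := by
    rw [show k + 1 + m - 1 = k + m by omega, show k + 1 + m - (k + 1) = m by omega]
    ring
  rw [hexp, pow_add, (Nat.even_mul_succ_self k).neg_one_pow, mul_one]

lemma card_filter_not_add_lt {n k : ℕ} (hk : k ≤ n) : #{j : Fin n | ¬(j : ℕ) + k < n} = k := by
  rw [filter_not, card_sdiff, inter_univ, card_univ, Fintype.card_fin]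
  have h := Fin.card_filter_val_lt (n := n) (m := n - k)
  simp only [Nat.lt_sub_iff_add_lt, min_eq_right (Nat.sub_le n k)] at h
  omega

lemma prod_ite_add_lt {M : Type*} [CommMonoid M] {n k : ℕ} (hk : k ≤ n) (a : M) :
    ∏ j : Fin n, (if (j : ℕ) + k < n then 1 else a) = a ^ k := by
  rw [prod_ite, prod_const_one, one_mul, prod_const, card_filter_not_add_lt hk]

lemma Matrix.det_of_mul_mul_submatrix {ι R : Type*} [Fintype ι] [DecidableEq ι] [CommRing R]
    (r c : ι → R) (σ : Perm ι) (M : Matrix ι ι R) :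
    (Matrix.of fun i j => r i * (c j * M i (σ j))).det =
      (∏ i, r i) * (∏ j, c j) * Perm.sign σ * M.det := by
  refine (Matrix.det_mul_column r (Matrix.of fun i j => c j * M.submatrix id σ i j)).trans ?_
  rw [Matrix.det_mul_row, Matrix.det_permute']
  ring

section Bethe

variable {K : Type*} [Field K]

lemma zpow_neg_eq_of_pow_mul_pow_eq {w z : K} {N L : ℕ} (hNL : N ≤ L)
    (h : w ^ N * (w + 1) ^ (L - N) = z ^ L) :
    z ^ (-(L : ℤ)) = w ^ (-(N : ℤ)) * (w + 1) ^ ((N : ℤ) - L) := by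
  rw [show (N : ℤ) - L = -((L - N : ℕ) : ℤ) by omega, zpow_neg, zpow_neg, zpow_neg,
    zpow_natCast, zpow_natCast, zpow_natCast, ← mul_inv, h]

lemma zpow_mul_zpow_eq_of_add {a b u : K} (ha : a ≠ 0) (hb : b ≠ 0)
    {p q p₁ q₁ p₂ q₂ p₃ q₃ : ℤ} (hu : u = a ^ p₂ * b ^ q₂)
    (hp : p = p₁ + p₂ + p₃) (hq : q = q₁ + q₂ + q₃) :
    a ^ p * b ^ q = a ^ p₁ * b ^ q₁ * (u * (a ^ p₃ * b ^ q₃)) := by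
  subst hu hp hq
  rw [zpow_add₀ ha, zpow_add₀ ha, zpow_add₀ hb, zpow_add₀ hb]
  ring

variable {N : ℕ}

def bethePowMatrix (w : Fin N → K) (y : Fin N → ℤ) : Matrix (Fin N) (Fin N) K :=
  Matrix.of fun i j => w i ^ (-(j : ℤ) - 1) * (w i + 1) ^ (y j + (j : ℤ) + 1)

def cyclicShift (L : ℕ) (y : Fin N → ℤ) {k : ℕ} (hk : k ≤ N) (c : ℤ) : Fin N → ℤ :=
  fun i => if h : (i : ℕ) + k < N then y ⟨i + k, h⟩ + c
    else y ⟨i + k - N, by have := i.isLt; omega⟩ - L + c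

lemma bethePowMatrix_cyclicShift {L : ℕ} {z : K} {w : Fin N → K}
    (hw0 : ∀ i, w i ≠ 0) (hw1 : ∀ i, w i + 1 ≠ 0)
    (hz : ∀ i, z ^ (-(L : ℤ)) = w i ^ (-(N : ℤ)) * (w i + 1) ^ ((N : ℤ) - L))
    (y : Fin N → ℤ) {k : ℕ} (hk : k ≤ N) (c : ℤ) :
    bethePowMatrix w (cyclicShift L y hk c) =
      Matrix.of fun i j : Fin N => w i ^ k * (w i + 1) ^ (c - k) *
        ((if (j : ℕ) + k < N then 1 else z ^ (-(L : ℤ))) *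
          bethePowMatrix w y i ((finRotate N ^ k) j)) := by
  ext i j
  rw [Matrix.of_apply, ← zpow_natCast (w i) k]
  by_cases h : (j : ℕ) + k < N
  · have hσ : (finRotate N ^ k) j = ⟨j + k, h⟩ :=
      Fin.ext (by rw [val_finRotate_pow_apply, Nat.mod_eq_of_lt h])
    simp only [bethePowMatrix, cyclicShift, Matrix.of_apply, dif_pos h, if_pos h, hσ]
    refine zpow_mul_zpow_eq_of_add (hw0 i) (hw1 i)
      (by simp : (1 : K) = w i ^ (0 : ℤ) * _ ^ (0 : ℤ)) ?_ ?_ <;> push_cast <;> ring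
  · have hσ : (finRotate N ^ k) j = ⟨j + k - N, by omega⟩ := Fin.ext (by
      rw [val_finRotate_pow_apply, Nat.mod_eq_sub_mod (by omega), Nat.mod_eq_of_lt (by omega)])
    simp only [bethePowMatrix, cyclicShift, Matrix.of_apply, dif_neg h, if_neg h, hσ]
    refine zpow_mul_zpow_eq_of_add (hw0 i) (hw1 i) (hz i) ?_ ?_ <;> omega

end Bethe

/-- shift identity for the determinant.  Indices are 0-based: `y j` is the
paper's `y_{j+1}`, so the matrix entry `w_i^{−j}(w_i+1)^{y_j+j}` (1-based) becomes
`w_i^{−j−1}(w_i+1)^{y_j+j+1}`.  For Bethe roots `w_i` (i.e. `w_i^N(w_i+1)^{L−N} = z^L`),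
`Y ∈ X_N(L)` and its `(k,c)`-shift `Ŷ`,
`det[w_i^{−j}(w_i+1)^{ŷ_j+j}] = det[w_i^{−j}(w_i+1)^{y_j+j}] · (−1)^{k(N−k)} z^{−kL}
  ∏_j w_j^k (w_j+1)^{−k+c}`. -/
theorem statement14 (N L : ℕ) (hNL : N < L) (z : ℂ)
    (w : Fin N → ℂ) (hw0 : ∀ i, w i ≠ 0) (hw1 : ∀ i, w i ≠ -1)
    (hBethe : ∀ i, (w i) ^ N * (w i + 1) ^ (L - N) = z ^ L)
    (y : Fin N → ℤ)
    (k : ℕ) (hkN : k ≤ N) (c : ℤ) :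
    let yhat : Fin N → ℤ := fun i =>
      if h : (i : ℕ) + k < N then y ⟨(i : ℕ) + k, h⟩ + c
      else y ⟨(i : ℕ) + k - N, by have := i.isLt; omega⟩ - L + c
    Matrix.det (Matrix.of fun i j : Fin N =>
        (w i) ^ (-(j : ℤ) - 1) * (w i + 1) ^ (yhat j + (j : ℤ) + 1)) =
      Matrix.det (Matrix.of fun i j : Fin N =>
        (w i) ^ (-(j : ℤ) - 1) * (w i + 1) ^ (y j + (j : ℤ) + 1)) *
      (-1) ^ (k * (N - k)) * z ^ (-((k * L : ℕ) : ℤ)) *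
      ∏ j : Fin N, (w j) ^ k * (w j + 1) ^ ((c : ℤ) - k) := by
  intro yhat
  change (bethePowMatrix w (cyclicShift L y hkN c)).det = (bethePowMatrix w y).det * _ * _ * _
  rw [bethePowMatrix_cyclicShift hw0 (fun i h => hw1 i (eq_neg_of_add_eq_zero_left h))
      (fun i => zpow_neg_eq_of_pow_mul_pow_eq hNL.le (hBethe i)),
    Matrix.det_of_mul_mul_submatrix, prod_ite_add_lt hkN, sign_finRotate_pow hkN,
    ← zpow_natCast, ← zpow_mul, neg_mul, Nat.cast_mul, mul_comm (k : ℤ)]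
  push_cast
  ring
end

section
/- Let R_z = {v_1,…,v_N} be distinct nonzero complex numbers with det[v_j^{−i}(v_j+1)^{y_i+i}]_{i,j=1}^N ≠ 0, let q_R(w) = ∏_{j}(w − v_j), and let u ∉ R_z, u ≠ 0. Then the unique solution (c_1,…,c_N) of the linear system Σ_{j=1}^N v_j^{−i}(v_j+1)^{y_i+i} c_j = −u^{−i}(u+1)^{y_i+i} (1 ≤ i ≤ N) is given by c_j = (v_j^N q_R(u))/(u^N q_R'(v_j)) · G_j/(v_j − u) / G, where G = det[v_b^{−a}(v_b+1)^{y_a+a}] and G_j is the same determinant with column j's node v_j replaced by u; equivalently, the Cramer's-rule ratio det[v_b^{−a}(v_b+1)^{y_a+a} 1_{b≠j} − u^{−a}(u+1)^{y_a+a} 1_{b=j}]/det[v_b^{−a}(v_b+1)^{y_a+a}] factors as [G_{λ}(R_z ∪ {u} ∖ {v_j}) / G_λ(R_z)] · (v_j^N q_R(u))/(u^N q_R'(v_j)(v_j − u)), using the auxiliary identity det[v_b^{−a}1_{b≠j} − u^{−a}1_{b=j}]/det[v_b^{−a}] = (v_j^N q_R(u))/(u^N q_R'(v_j)(v_j − u)).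 -/
/-!
Write `P(x)` for the matrix `[x_b^{-a-1}]`; then `P(x) = (vandermonde x⁻¹)ᵀ * diagonal x⁻¹`, so
`det P(x) = (∏ x_b)⁻¹ * det (vandermonde x⁻¹)`. Moving node `p` to the front by a cycle and expanding
the Vandermonde product shows that replacing `x_p` by `u` multiplies the Vandermonde determinant by
`∏_{b ≠ p} (x_b - u) / (x_b - x_p)`; with the nodes inverted this is the auxiliary identity, since
`q_R(u) = (u - v_j) ∏_{b ≠ j} (u - v_b)` and `q_R'(v_j) = ∏_{b ≠ j} (v_j - v_b)`. The Cramer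
matrix of `A` is, up to the sign of column `j`, the matrix `A` at the nodes `R_z ∪ {u} ∖ {v_j}`,
so dividing numerator and denominator by the corresponding `det P` gives the factorisation through
`G_λ`, and Cramer's rule gives `c_j`.
-/

open Matrix Finset

theorem det_vandermonde_cons {R : Type*} [CommRing R] {n : ℕ} (a : R) (x : Fin n → R) :
    det (vandermonde (Fin.cons a x : Fin (n + 1) → R)) =
      (∏ i, (x i - a)) * det (vandermonde x) := by
  simp only [det_vandermonde, Fin.prod_univ_succ, Fin.prod_Ioi_zero, Fin.prod_Ioi_succ,
    Fin.cons_zero, Fin.cons_succ]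

theorem det_vandermonde_update_mul {R : Type*} [CommRing R] {n : ℕ} (x : Fin (n + 1) → R)
    (p : Fin (n + 1)) (u : R) :
    det (vandermonde (Function.update x p u)) * ∏ i, (x (p.succAbove i) - x p) =
      det (vandermonde x) * ∏ i, (x (p.succAbove i) - u) := by
  set s : R := ((Equiv.Perm.sign p.cycleRange.symm : ℤ) : R)
  have hs : s * s = 1 := by
    rw [← Int.cast_mul, ← Units.val_mul, Int.units_mul_self, Units.val_one, Int.cast_one]
  have h (y : Fin (n + 1) → R) :
      (∏ i, (p.removeNth y i - y p)) * det (vandermonde (p.removeNth y)) =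
        s * det (vandermonde y) := by
    rw [← det_vandermonde_cons, Fin.cons_removeNth_eq_comp_cycleRange_symm]
    exact det_permute p.cycleRange.symm (vandermonde y)
  have hx := h x
  have hw := h (Function.update x p u)
  simp only [Fin.removeNth_update, Function.update_self] at hw
  simp only [Fin.removeNth_apply] at hx hw
  -- the sign `s` of the cycle drops out because `s * s = 1`
  set P := ∏ i, (x (p.succAbove i) - x p)
  set Q := ∏ i, (x (p.succAbove i) - u)
  linear_combination (det (vandermonde x) * Q - det (vandermonde (Function.update x p u)) * P) * hs
    - s * P * hw + s * Q * hx

section NegZpow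

variable {K : Type*} [Field K] {n : ℕ}

-- Rows are 0-based: row `a` is the paper's row `a + 1`, i.e. `[x_b^{-a}]_{a=1}^N`.
def negZpowVandermonde (x : Fin n → K) : Matrix (Fin n) (Fin n) K :=
  of fun a b => x b ^ (-(a : ℤ) - 1)

theorem negZpowVandermonde_eq (x : Fin n → K) :
    negZpowVandermonde x = (vandermonde x⁻¹)ᵀ * diagonal x⁻¹ := by
  ext a b
  rw [negZpowVandermonde, of_apply, mul_diagonal, transpose_apply, vandermonde_apply, Pi.inv_apply,
    ← neg_add', _root_.zpow_neg, ← Nat.cast_succ, zpow_natCast, pow_succ, mul_inv, inv_pow]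

theorem det_negZpowVandermonde (x : Fin n → K) :
    det (negZpowVandermonde x) = (∏ b, x b)⁻¹ * det (vandermonde x⁻¹) := by
  rw [negZpowVandermonde_eq, det_mul, det_transpose, det_diagonal, Pi.inv_def, prod_inv_distrib,
    mul_comm]

theorem det_negZpowVandermonde_ne_zero {x : Fin n → K} (hx : Function.Injective x)
    (hx0 : ∀ b, x b ≠ 0) : det (negZpowVandermonde x) ≠ 0 := by
  rw [det_negZpowVandermonde]
  exact mul_ne_zero (inv_ne_zero (prod_ne_zero_iff.mpr fun b _ => hx0 b))
    (det_vandermonde_ne_zero_iff.mpr (inv_injective.comp hx))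

theorem det_negZpowVandermonde_update_mul (x : Fin (n + 1) → K) (hx0 : ∀ b, x b ≠ 0)
    (p : Fin (n + 1)) {u : K} (hu0 : u ≠ 0) :
    det (negZpowVandermonde (Function.update x p u)) * u ^ (n + 1) *
        ∏ i, (x p - x (p.succAbove i)) =
      det (negZpowVandermonde x) * x p ^ (n + 1) * ∏ i, (u - x (p.succAbove i)) := by
  have key := det_vandermonde_update_mul x⁻¹ p u⁻¹
  rw [Function.update_inv] at key
  simp only [Pi.inv_apply] at key
  have hinv (c : K) (hc : c ≠ 0) : ∏ i, ((x (p.succAbove i))⁻¹ - c⁻¹) =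
      (∏ i, (c - x (p.succAbove i))) / ((∏ i, x (p.succAbove i)) * c ^ n) := by
    calc ∏ i, ((x (p.succAbove i))⁻¹ - c⁻¹)
        _ = ∏ i, ((c - x (p.succAbove i)) / (x (p.succAbove i) * c)) :=
          prod_congr rfl fun i _ => by field_simp [hx0 (p.succAbove i)]
        _ = _ := by rw [prod_div_distrib, prod_mul_distrib, prod_const, card_univ, Fintype.card_fin]
  rw [hinv _ (hx0 p), hinv _ hu0] at key
  rw [det_negZpowVandermonde, det_negZpowVandermonde, Fin.prod_univ_succAbove _ p,
    Fin.prod_univ_succAbove _ p, Function.update_self]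
  simp only [Function.update_of_ne (Fin.succAbove_ne p _)]
  have hr : ∏ i, x (p.succAbove i) ≠ 0 := prod_ne_zero_iff.mpr fun i _ => hx0 _
  have hp := hx0 p
  field_simp at key ⊢
  linear_combination x p * u * key

theorem det_negZpowVandermonde_update_ne_zero {x : Fin (n + 1) → K} (hx : Function.Injective x)
    (hx0 : ∀ b, x b ≠ 0) (p : Fin (n + 1)) {u : K} (hu0 : u ≠ 0) (hux : ∀ b, u ≠ x b) :
    det (negZpowVandermonde (Function.update x p u)) ≠ 0 := by
  intro h0
  have key := det_negZpowVandermonde_update_mul x hx0 p hu0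
  rw [h0, zero_mul, zero_mul] at key
  exact mul_ne_zero (mul_ne_zero (det_negZpowVandermonde_ne_zero hx hx0) (pow_ne_zero _ (hx0 p)))
    (prod_ne_zero_iff.mpr fun i _ => sub_ne_zero.mpr (hux _)) key.symm

end NegZpow

theorem deriv_prod_sub_apply {𝕜 : Type*} [NontriviallyNormedField 𝕜] {n : ℕ}
    (x : Fin (n + 1) → 𝕜) (p : Fin (n + 1)) :
    deriv (fun z => ∏ b, (z - x b)) (x p) = ∏ i, (x p - x (p.succAbove i)) := by
  have h : (fun z => ∏ b, (z - x b)) = fun z => (z - x p) * ∏ i, (z - x (p.succAbove i)) :=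
    funext fun z => Fin.prod_univ_succAbove _ p
  rw [h, deriv_fun_mul (by fun_prop) (by fun_prop)]
  simp

theorem neg_det_negZpowVandermonde_update_div {𝕜 : Type*} [NontriviallyNormedField 𝕜] {n : ℕ}
    {v : Fin (n + 1) → 𝕜} (hv : Function.Injective v) (hv0 : ∀ b, v b ≠ 0) {u : 𝕜} (hu0 : u ≠ 0)
    (huv : ∀ b, u ≠ v b) (j : Fin (n + 1)) :
    -det (negZpowVandermonde (Function.update v j u)) / det (negZpowVandermonde v) =
      v j ^ (n + 1) * (∏ b, (u - v b)) /
        (u ^ (n + 1) * deriv (fun z => ∏ b, (z - v b)) (v j) * (v j - u)) := by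
  have hV := det_negZpowVandermonde_ne_zero hv hv0
  have hq'0 : ∏ i, (v j - v (j.succAbove i)) ≠ 0 :=
    prod_ne_zero_iff.mpr fun i _ => sub_ne_zero.mpr (hv.ne (Fin.succAbove_ne j i).symm)
  have hvu : v j - u ≠ 0 := sub_ne_zero.mpr (huv j).symm
  rw [Fin.prod_univ_succAbove _ j, deriv_prod_sub_apply v j]
  field_simp
  linear_combination (u - v j) * det_negZpowVandermonde_update_mul v hv0 j hu0

section Columns
variable {R α ι : Type*} [CommRing R] [Fintype ι] [DecidableEq ι]

theorem det_of_ite_neg_eq_neg_det_update (F : ι → α → R) (x : ι → α) (j : ι) (u : α) :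
    det (of fun a b => if b = j then -F a u else F a (x b)) =
      -det (of fun a b => F a (Function.update x j u b)) := by
  have h : (of fun a b => if b = j then -F a u else F a (x b)) =
      (of fun a b => F a (Function.update x j u b)).updateCol j ((-1 : R) • fun a => F a u) := by
    ext a b
    by_cases hb : b = j <;> simp [hb]
  rw [h, det_updateCol_smul, neg_one_mul]
  congr 2
  ext a b
  by_cases hb : b = j <;> simp [hb]

theorem existsUnique_mulVec_eq {K : Type*} [Field K] {A : Matrix ι ι K} (hA : det A ≠ 0)
    (b : ι → K) : ∃! c, A *ᵥ c = b := by
  refine ⟨A⁻¹ *ᵥ b, ?_, fun c hc => ?_⟩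
  · dsimp only
    rw [mulVec_mulVec, mul_nonsing_inv _ (isUnit_iff_ne_zero.mpr hA), one_mulVec]
  · rw [← hc, mulVec_mulVec, nonsing_inv_mul _ (isUnit_iff_ne_zero.mpr hA), one_mulVec]

theorem eq_det_updateCol_div_det_of_mulVec_eq {K : Type*} [Field K] {A : Matrix ι ι K}
    (hA : det A ≠ 0) {c b : ι → K} (h : A *ᵥ c = b) (j : ι) :
    c j = det (A.updateCol j b) / det A := by
  rw [← cramer_apply, ← h, cramer_eq_adjugate_mulVec, mulVec_mulVec, adjugate_mul, smul_mulVec,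
    one_mulVec, Pi.smul_apply, smul_eq_mul, mul_div_cancel_left₀ _ hA]

end Columns

theorem statement16_general (N : ℕ) (hN : 0 < N) (y : Fin N → ℤ)
    (v : Fin N → ℂ) (hinj : Function.Injective v)
    (hv0 : ∀ i, v i ≠ 0)
    (u : ℂ) (hu0 : u ≠ 0) (huv : ∀ i, u ≠ v i) :
    let A : Matrix (Fin N) (Fin N) ℂ := Matrix.of fun a b =>
      (v b) ^ (-(a : ℤ) - 1) * (v b + 1) ^ (y a + (a : ℤ) + 1)
    let V : Matrix (Fin N) (Fin N) ℂ := Matrix.of fun a b => (v b) ^ (-(a : ℤ) - 1)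
    let qR : ℂ → ℂ := fun x => ∏ b : Fin N, (x - v b)
    let Gl : (Fin N → ℂ) → ℂ := fun Wt =>
      Matrix.det (Matrix.of fun a b =>
          (Wt b) ^ (-(a : ℤ) - 1) * (Wt b + 1) ^ (y a + (a : ℤ) + 1)) /
        Matrix.det (Matrix.of fun a b => (Wt b) ^ (-(a : ℤ) - 1))
    Matrix.det A ≠ 0 →
    (∀ j : Fin N,
      Matrix.det (Matrix.of fun a b =>
          if b = j then -(u ^ (-(a : ℤ) - 1)) else (v b) ^ (-(a : ℤ) - 1)) /
        Matrix.det V =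
      (v j) ^ (N : ℕ) * qR u / (u ^ (N : ℕ) * deriv qR (v j)) * (1 / (v j - u))) ∧
    (∀ j : Fin N,
      Matrix.det (Matrix.of fun a b =>
          if b = j then -(u ^ (-(a : ℤ) - 1) * (u + 1) ^ (y a + (a : ℤ) + 1))
          else A a b) / Matrix.det A =
      Gl (Function.update v j u) / Gl v *
        ((v j) ^ (N : ℕ) * qR u / (u ^ (N : ℕ) * deriv qR (v j) * (v j - u)))) ∧
    (∃! c : Fin N → ℂ, ∀ a : Fin N,
      (∑ b : Fin N, A a b * c b) =
        -(u ^ (-(a : ℤ) - 1) * (u + 1) ^ (y a + (a : ℤ) + 1))) ∧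
    (∀ c : Fin N → ℂ,
      (∀ a : Fin N, (∑ b : Fin N, A a b * c b) =
        -(u ^ (-(a : ℤ) - 1) * (u + 1) ^ (y a + (a : ℤ) + 1))) →
      ∀ j : Fin N, c j =
        Gl (Function.update v j u) / Gl v *
          ((v j) ^ (N : ℕ) * qR u / (u ^ (N : ℕ) * deriv qR (v j) * (v j - u)))) := by
  obtain ⟨n, rfl⟩ := Nat.exists_eq_add_one_of_ne_zero hN.ne'
  intro A V qR Gl hA
  have hfactor (j) : v j ^ (n + 1) * qR u / (u ^ (n + 1) * deriv qR (v j) * (v j - u)) =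
      -det (negZpowVandermonde (Function.update v j u)) / det (negZpowVandermonde v) :=
    (neg_det_negZpowVandermonde_update_div hinj hv0 hu0 huv j).symm
  have hGl (x : Fin (n + 1) → ℂ) : Gl x = det (of fun (a b : Fin (n + 1)) =>
      x b ^ (-(a : ℤ) - 1) * (x b + 1) ^ (y a + (a : ℤ) + 1)) / det (negZpowVandermonde x) := rfl
  have hGlv : Gl v = det A / det (negZpowVandermonde v) := rfl
  have hcramer (j) : det (of fun (a b : Fin (n + 1)) =>
          if b = j then -(u ^ (-(a : ℤ) - 1) * (u + 1) ^ (y a + (a : ℤ) + 1))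
          else v b ^ (-(a : ℤ) - 1) * (v b + 1) ^ (y a + (a : ℤ) + 1)) / det A =
      Gl (Function.update v j u) / Gl v *
        (v j ^ (n + 1) * qR u / (u ^ (n + 1) * deriv qR (v j) * (v j - u))) := by
    rw [det_of_ite_neg_eq_neg_det_update
      (fun (a : Fin (n + 1)) z => z ^ (-(a : ℤ) - 1) * (z + 1) ^ (y a + (a : ℤ) + 1)) v j u,
      hfactor j, hGl, hGlv]
    field_simp [hA, det_negZpowVandermonde_ne_zero hinj hv0,
      det_negZpowVandermonde_update_ne_zero hinj hv0 j hu0 huv]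
  set r : Fin (n + 1) → ℂ := fun a => -(u ^ (-(a : ℤ) - 1) * (u + 1) ^ (y a + (a : ℤ) + 1))
  have hsys (c : Fin (n + 1) → ℂ) : (∀ a, ∑ b, A a b * c b = r a) ↔ A *ᵥ c = r :=
    funext_iff.symm
  refine ⟨fun j => ?_, hcramer, (existsUnique_congr hsys).2 (existsUnique_mulVec_eq hA r),
    fun c hc j => ?_⟩
  · rw [det_of_ite_neg_eq_neg_det_update (fun (a : Fin (n + 1)) z => z ^ (-(a : ℤ) - 1)) v j u,
      mul_one_div, div_div, hfactor j]
    rfl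
  · rw [eq_det_updateCol_div_det_of_mulVec_eq hA ((hsys c).1 hc) j, ← hcramer j]
    congr 3
    ext a b
    simp [updateCol_apply, A, r]

/-- Cramer's-rule solution of the linear system behind the characteristic
function.  Indices are 0-based: row `a` corresponds to the paper's `i = a+1`, so entries
read `v_b^{−a−1}(v_b+1)^{y_a+a+1}`.  With `A` the coefficient matrix, `q_R(w) = ∏(w−v_b)`,
and `G_λ(W) = det[W_b^{−a}(W_b+1)^{y_a+a}]/det[W_b^{−a}]`: the Vandermonde auxiliary
identity holds, the Cramer ratio factors through `G_λ`, and the linear system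
`Σ_b A(a,b) c_b = −u^{−a}(u+1)^{y_a+a}` has a unique solution, given by
`c_j = (G_λ(R_z∪{u}∖{v_j})/G_λ(R_z)) · v_j^N q_R(u)/(u^N q_R'(v_j)(v_j−u))`. -/
theorem statement16 (N : ℕ) (hN : 0 < N) (y : Fin N → ℤ)
    (v : Fin N → ℂ) (hinj : Function.Injective v)
    (hv0 : ∀ i, v i ≠ 0) (hv1 : ∀ i, v i ≠ -1)
    (u : ℂ) (hu0 : u ≠ 0) (hu1 : u ≠ -1) (huv : ∀ i, u ≠ v i) :
    let A : Matrix (Fin N) (Fin N) ℂ := Matrix.of fun a b =>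
      (v b) ^ (-(a : ℤ) - 1) * (v b + 1) ^ (y a + (a : ℤ) + 1)
    let V : Matrix (Fin N) (Fin N) ℂ := Matrix.of fun a b => (v b) ^ (-(a : ℤ) - 1)
    let qR : ℂ → ℂ := fun x => ∏ b : Fin N, (x - v b)
    let Gl : (Fin N → ℂ) → ℂ := fun Wt =>
      Matrix.det (Matrix.of fun a b =>
          (Wt b) ^ (-(a : ℤ) - 1) * (Wt b + 1) ^ (y a + (a : ℤ) + 1)) /
        Matrix.det (Matrix.of fun a b => (Wt b) ^ (-(a : ℤ) - 1))
    Matrix.det A ≠ 0 →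
    (∀ j : Fin N,
      Matrix.det (Matrix.of fun a b =>
          if b = j then -(u ^ (-(a : ℤ) - 1)) else (v b) ^ (-(a : ℤ) - 1)) /
        Matrix.det V =
      (v j) ^ (N : ℕ) * qR u / (u ^ (N : ℕ) * deriv qR (v j)) * (1 / (v j - u))) ∧
    (∀ j : Fin N,
      Matrix.det (Matrix.of fun a b =>
          if b = j then -(u ^ (-(a : ℤ) - 1) * (u + 1) ^ (y a + (a : ℤ) + 1))
          else A a b) / Matrix.det A =
      Gl (Function.update v j u) / Gl v *
        ((v j) ^ (N : ℕ) * qR u / (u ^ (N : ℕ) * deriv qR (v j) * (v j - u)))) ∧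
    (∃! c : Fin N → ℂ, ∀ a : Fin N,
      (∑ b : Fin N, A a b * c b) =
        -(u ^ (-(a : ℤ) - 1) * (u + 1) ^ (y a + (a : ℤ) + 1))) ∧
    (∀ c : Fin N → ℂ,
      (∀ a : Fin N, (∑ b : Fin N, A a b * c b) =
        -(u ^ (-(a : ℤ) - 1) * (u + 1) ^ (y a + (a : ℤ) + 1))) →
      ∀ j : Fin N, c j =
        Gl (Function.update v j u) / Gl v *
          ((v j) ^ (N : ℕ) * qR u / (u ^ (N : ℕ) * deriv qR (v j) * (v j - u)))) :=
  statement16_general N hN y v hinj hv0 u hu0 huv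
end
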